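/- arXiv:cond-mat/0107260 — 6 statements merged into one kernel-verified Lean document; each statement's English description precedes it below -/
import Mathlib

section
/- Let L, M, K be natural numbers. For every coefficient function g : Finset(Fin L) → ℂ and every finite set S ⊆ Fin L of sites, the K-th power of the total spin-lowering operator satisfies ((S⁻)^K g)(S) = K! · Σ_{T ⊆ S, |T| = |S| − K} g(T). In particular, if |S| = M + K then (1/K!)·((S⁻)^K g)(S) = Σ_{T ⊆ S, |T| = M} g(T); i.e., the coefficient of (1/K!)(S⁻)^K applied to a state with M-down-spin amplitudes g equals the sum of g over all M-element subsets of the down-spin positions (Proposition A.1, eq. (A.2)/(1.8) of the paper). -/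
open Finset

/-- The total spin-lowering operator `S⁻` acting on coefficient functions of a
spin-1/2 chain of `L` sites: `(S⁻ g)(S) = Σ_{x ∈ S} g(S \ {x})`. -/
noncomputable def lowerOp (L : ℕ) (g : Finset (Fin L) → ℂ) : Finset (Fin L) → ℂ :=
  fun S => ∑ x ∈ S, g (S.erase x)

/-- Each `T ⊆ S` with `|S \ T| = K + 1` arises from exactly the `K + 1` points `x ∈ S \ T`. -/
theorem sum_sum_powerset_erase_filter_card {α β : Type*} [DecidableEq α] [AddCommMonoid β]
    (f : Finset α → β) (S : Finset α) (K : ℕ) :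
    ∑ x ∈ S, ∑ T ∈ (S.erase x).powerset.filter (fun T => T.card + K = (S.erase x).card), f T
      = (K + 1) • ∑ T ∈ S.powerset.filter (fun T => T.card + (K + 1) = S.card), f T := by
  rw [sum_comm' (s' := fun T => S \ T)
    (t' := S.powerset.filter (fun T => T.card + (K + 1) = S.card)), smul_sum]
  · refine sum_congr rfl fun T hT => ?_
    rw [mem_filter, mem_powerset] at hT
    rw [sum_const, card_sdiff_of_subset hT.1]
    congr 1
    omega
  · intro x T
    simp only [mem_filter, mem_powerset, subset_erase, mem_sdiff]
    constructor
    · rintro ⟨hx, ⟨hTS, hxT⟩, hcard⟩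
      rw [card_erase_of_mem hx] at hcard
      have := card_pos.mpr ⟨x, hx⟩
      exact ⟨⟨hx, hxT⟩, hTS, by omega⟩
    · rintro ⟨⟨hx, hxT⟩, hTS, hcard⟩
      rw [card_erase_of_mem hx]
      exact ⟨hx, ⟨hTS, hxT⟩, by omega⟩

theorem lowerOp_iterate_apply (L K : ℕ) (g : Finset (Fin L) → ℂ) (S : Finset (Fin L)) :
    (lowerOp L)^[K] g S
      = (K.factorial : ℂ) * ∑ T ∈ S.powerset.filter (fun T => T.card + K = S.card), g T := by
  induction K generalizing S with
  | zero => simp [← powersetCard_eq_filter, powersetCard_self]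
  | succ K ih =>
    calc (lowerOp L)^[K + 1] g S
        = ∑ x ∈ S, (lowerOp L)^[K] g (S.erase x) := by
          rw [Function.iterate_succ_apply']; rfl
      _ = (K.factorial : ℂ) * ((K + 1) • ∑ T ∈ S.powerset.filter
            (fun T => T.card + (K + 1) = S.card), g T) := by
          simp only [ih, ← mul_sum, sum_sum_powerset_erase_filter_card]
      _ = ((K + 1).factorial : ℂ) * ∑ T ∈ S.powerset.filter
            (fun T => T.card + (K + 1) = S.card), g T := by
          rw [nsmul_eq_mul, Nat.factorial_succ]
          push_cast
          ring

/-- Proposition A.1 (eq. (A.2)/(1.8)): the `K`-th power of the spin-lowering operator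
satisfies `((S⁻)^K g)(S) = K! · Σ_{T ⊆ S, |T| = |S| − K} g(T)`; in particular if
`|S| = M + K` then `(1/K!)·((S⁻)^K g)(S) = Σ_{T ⊆ S, |T| = M} g(T)`. -/
theorem lowering_power_coeff (L M K : ℕ) (g : Finset (Fin L) → ℂ) (S : Finset (Fin L)) :
    ((lowerOp L)^[K] g S
      = (Nat.factorial K : ℂ) *
          ∑ T ∈ S.powerset.filter (fun T => T.card + K = S.card), g T)
    ∧ (S.card = M + K →
        (1 / (Nat.factorial K : ℂ)) * ((lowerOp L)^[K] g S)
          = ∑ T ∈ S.powersetCard M, g T) := by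
  refine ⟨lowerOp_iterate_apply L K g S, fun hcard => ?_⟩
  have hfac : (K.factorial : ℂ) ≠ 0 := Nat.cast_ne_zero.mpr K.factorial_ne_zero
  rw [lowerOp_iterate_apply, one_div, inv_mul_cancel_left₀ hfac, powersetCard_eq_filter]
  exact sum_congr (filter_congr fun T _ => by omega) fun _ _ => rfl
end

section
/- Let M ∈ ℕ, let P be a permutation of {1,…,M}, and let v₁,…,v_M ∈ ℂ satisfy v_j − v_k + 2i ≠ 0 for all 1 ≤ j < k ≤ M. Then the Bethe amplitude satisfies A_M(P)[v₁,…,v_M] = ∏_{1≤j<k≤M} ((v_j − v_k − 2i)/(v_j − v_k + 2i))^{H(P⁻¹j − P⁻¹k)}, i.e., A_M(P)[v] equals the product of (v_j − v_k − 2i)/(v_j − v_k + 2i) over exactly those pairs j < k with P⁻¹j > P⁻¹k (Proposition III.1, eq. (2.10)). -/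
/-!
Send each pair `j < k` to the sorted pair `{P j, P k}`. The numerator factor
`v_{Pj} − v_{Pk} + 2i` becomes `v_a − v_b + 2i` on the pair `a < b` if `(a, b)` is not an inversion
of `P⁻¹`, and `−(v_a − v_b − 2i)` if it is. The signs collected this way multiply to
`sign P⁻¹ = sign P`, which cancels `ε(P)`; on the non-inversions numerator and denominator cancel.
-/

open Finset

/-- The Bethe amplitude `A_M(P)[v₁,…,v_M] = ε(P) · ∏_{j<k} (v_{Pj} − v_{Pk} + 2i)/(v_j − v_k + 2i)`. -/
noncomputable def betheAmp (M : ℕ) (v : Fin M → ℂ) (P : Equiv.Perm (Fin M)) : ℂ :=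
  (Equiv.Perm.sign P : ℤ) *
    ∏ jk ∈ univ.filter (fun jk : Fin M × Fin M => jk.1 < jk.2),
      (v (P jk.1) - v (P jk.2) + 2 * Complex.I) / (v jk.1 - v jk.2 + 2 * Complex.I)

namespace Equiv.Perm

theorem prod_filter_lt_comp {α M : Type*} [LinearOrder α] [Fintype α] [CommMonoid M]
    (σ : Perm α) (f : α → α → M) :
    ∏ p ∈ univ.filter (fun p : α × α => p.1 < p.2), f (σ p.1) (σ p.2) =
      ∏ p ∈ univ.filter (fun p : α × α => p.1 < p.2),
        if σ⁻¹ p.2 < σ⁻¹ p.1 then f p.2 p.1 else f p.1 p.2 := by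
  refine prod_nbij' (fun p => (min (σ p.1) (σ p.2), max (σ p.1) (σ p.2)))
    (fun p => (min (σ⁻¹ p.1) (σ⁻¹ p.2), max (σ⁻¹ p.1) (σ⁻¹ p.2))) ?_ ?_ ?_ ?_ ?_ <;>
  rintro ⟨j, k⟩ h <;>
  simp only [mem_univ, true_and, mem_filter] at h ⊢
  · exact min_lt_max.2 (σ.injective.ne h.ne)
  · exact min_lt_max.2 (σ⁻¹.injective.ne h.ne)
  · rcases lt_or_gt_of_ne (σ.injective.ne h.ne) with hσ | hσ
    · simp [min_eq_left hσ.le, max_eq_right hσ.le, h.le]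
    · simp [min_eq_right hσ.le, max_eq_left hσ.le, h.le]
  · rcases lt_or_gt_of_ne (σ⁻¹.injective.ne h.ne) with hσ | hσ
    · rw [min_eq_left hσ.le, max_eq_right hσ.le]
      simp [h.le]
    · rw [min_eq_right hσ.le, max_eq_left hσ.le]
      simp [h.le]
  · rcases lt_or_gt_of_ne (σ.injective.ne h.ne) with hσ | hσ
    · simp [min_eq_left hσ.le, max_eq_right hσ.le, h.not_gt]
    · simp [min_eq_right hσ.le, max_eq_left hσ.le, h]

theorem sign_eq_prod_filter_lt {n : ℕ} (σ : Perm (Fin n)) :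
    sign σ = ∏ p ∈ univ.filter (fun p : Fin n × Fin n => p.1 < p.2),
      if σ p.2 < σ p.1 then -1 else 1 := by
  rw [sign_eq_prod_prod_Ioi, prod_filter, Fintype.prod_prod_type]
  refine prod_congr rfl fun i _ => ?_
  rw [← filter_lt_eq_Ioi, prod_filter]
  refine prod_congr rfl fun j _ => ?_
  by_cases hij : i < j
  · rcases lt_or_gt_of_ne (σ.injective.ne hij.ne) with hσ | hσ <;> simp [hij, hσ, hσ.not_gt]
  · simp [hij]

end Equiv.Perm

/-- Proposition III.1 (eq. (2.10)): the Bethe amplitude equals the product of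
`(v_j − v_k − 2i)/(v_j − v_k + 2i)` over exactly those pairs `j < k` with `P⁻¹j > P⁻¹k`. -/
theorem prop_III_1 (M : ℕ) (P : Equiv.Perm (Fin M)) (v : Fin M → ℂ)
    (hv : ∀ j k : Fin M, j < k → v j - v k + 2 * Complex.I ≠ 0) :
    betheAmp M v P
      = ∏ jk ∈ univ.filter (fun jk : Fin M × Fin M => jk.1 < jk.2),
          (if P⁻¹ jk.2 < P⁻¹ jk.1 then
            (v jk.1 - v jk.2 - 2 * Complex.I) / (v jk.1 - v jk.2 + 2 * Complex.I)
          else 1) := by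
  have hsign : ((Equiv.Perm.sign P : ℤ) : ℂ) =
      ∏ jk ∈ univ.filter (fun jk : Fin M × Fin M => jk.1 < jk.2),
        if P⁻¹ jk.2 < P⁻¹ jk.1 then -1 else 1 := by
    rw [← Equiv.Perm.sign_inv, Equiv.Perm.sign_eq_prod_filter_lt]
    push_cast [apply_ite]
    rfl
  have hnum := Equiv.Perm.prod_filter_lt_comp P (fun a b => v a - v b + 2 * Complex.I)
  rw [betheAmp, prod_div_distrib, hnum, ← prod_div_distrib, hsign, ← prod_mul_distrib]
  refine prod_congr rfl fun jk hjk => ?_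
  split_ifs
  · ring
  · rw [one_mul, div_self (hv _ _ (mem_filter.1 hjk).2)]
end

section
/- Let R, K ∈ ℕ, let P be a permutation of {1,…,R+K}, let v₁,…,v_R ∈ ℂ satisfy v_j − v_k + 2i ≠ 0 for all 1 ≤ j < k ≤ R, and let δ₁,…,δ_K ∈ ℂ satisfy δ_j − δ_k + 2i ≠ 0 for all 1 ≤ j < k ≤ K. For Λ ∈ ℝ define the (R+K)-tuple w(Λ) by w_j(Λ) = v_j for 1 ≤ j ≤ R and w_{R+j}(Λ) = Λ + δ_j for 1 ≤ j ≤ K. Then, as Λ → +∞ along the reals, A_{R+K}(P)[w(Λ)] converges to A_R(P_R)[v₁,…,v_R] · A_K(P_K)[δ₁,…,δ_K], where P_R and P_K are the induced permutations of {1,…,R} and {1,…,K}. -/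
/-!
When no denominator vanishes, `A_M(P)[w] = ∏_{j<k, P⁻¹k<P⁻¹j} S(w_j − w_k)` with
`S(x) = (x − 2i)/(x + 2i)`: reordering the numerators changes the sign of exactly the factors
indexed by inversions of `P⁻¹`, which cancels `ε(P)`. For `w(Λ) = (v, Λ + δ)` the inversions
inside the first `R` and the last `K` entries are those of `P_R` and `P_K`, because `a` and `b` are
increasing, and `Λ` cancels inside the last block. Every inversion between the two blocks
contributes a factor `S(v_j − δ_k − Λ)`, which tends to `1`.
-/

open Finset

open Complex Filter Topology

def BetheNondegenerate {M : ℕ} (w : Fin M → ℂ) : Prop :=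
  ∀ j k : Fin M, j < k → w j - w k + 2 * I ≠ 0

noncomputable def scatteringFactor (x : ℂ) : ℂ := (x - 2 * I) / (x + 2 * I)

theorem tendsto_scatteringFactor_sub_atTop (c : ℂ) :
    Tendsto (fun Λ : ℝ => scatteringFactor (c - Λ)) atTop (𝓝 1) := by
  have hinv : Tendsto (fun Λ : ℝ => (Λ : ℂ)⁻¹) atTop (𝓝 0) := by
    simpa [Function.comp_def] using (continuous_ofReal.tendsto 0).comp tendsto_inv_atTop_zero
  have hlim := ((hinv.const_mul (c - 2 * I)).sub_const 1).div
    ((hinv.const_mul (c + 2 * I)).sub_const 1) (by norm_num)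
  rw [mul_zero, mul_zero, div_self (by norm_num)] at hlim
  refine hlim.congr' ?_
  filter_upwards [eventually_gt_atTop 0] with Λ hΛ
  have hΛ0 : (Λ : ℂ) ≠ 0 := ofReal_ne_zero.2 hΛ.ne'
  rw [Pi.div_apply, scatteringFactor]
  field_simp
  ring

theorem prod_filter_fst_lt_snd {α β : Type*} [Fintype α] [LinearOrder α]
    [LocallyFiniteOrderTop α] [CommMonoid β] (f : α → α → β) :
    ∏ jk ∈ univ.filter (fun jk : α × α => jk.1 < jk.2), f jk.1 jk.2 =
      ∏ j, ∏ k ∈ Ioi j, f j k := by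
  rw [prod_filter, Fintype.prod_prod_type]
  simp [← filter_lt_eq_Ioi, prod_filter]

theorem betheAmp_eq_prod_scatteringFactor {M : ℕ} (w : Fin M → ℂ) (P : Equiv.Perm (Fin M))
    (hw : BetheNondegenerate w) :
    betheAmp M w P = ∏ j, ∏ k,
      if j < k ∧ P⁻¹ k < P⁻¹ j then scatteringFactor (w j - w k) else 1 := by
  set g : Fin M → Fin M → ℂ := fun x y => w x - w y + 2 * I
  -- `f` is antisymmetric and agrees with `g` on the pairs `(P j, P k)`, `j < k`, so Mathlib's
  -- `prod_Ioi_comp_eq_sign_mul_prod` turns the numerator into `sign P` times a product of `f`.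
  set f : Fin M → Fin M → ℂ := fun x y =>
    if P⁻¹ x < P⁻¹ y then g x y else if P⁻¹ y < P⁻¹ x then -g y x else 0 with hf_def
  have hf : ∀ x y, f x y = -f y x := by
    intro x y
    rcases lt_trichotomy (P⁻¹ x) (P⁻¹ y) with h | h | h
    · simp only [hf_def, if_pos h, if_neg h.not_gt, neg_neg]
    · simp only [hf_def, h, lt_irrefl, if_false, neg_zero]
    · simp only [hf_def, if_pos h, if_neg h.not_gt]
  have hnum : ∏ j, ∏ k ∈ Ioi j, g (P j) (P k) = ∏ j, ∏ k ∈ Ioi j, f (P j) (P k) :=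
    prod_congr rfl fun j _ => prod_congr rfl fun k hk => by
      simp [hf_def, mem_Ioi.1 hk]
  have hsign : ((Equiv.Perm.sign P : ℤ) : ℂ) * ((Equiv.Perm.sign P : ℤ) : ℂ) = 1 := by
    rw [← Int.cast_mul, ← Units.val_mul, Int.units_mul_self, Units.val_one, Int.cast_one]
  rw [betheAmp, prod_filter_fst_lt_snd (fun j k => g (P j) (P k) / g j k)]
  simp only [prod_div_distrib]
  rw [hnum, P.prod_Ioi_comp_eq_sign_mul_prod hf, mul_div_assoc', ← mul_assoc, hsign, one_mul]
  rw [← prod_div_distrib]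
  refine prod_congr rfl fun j _ => ?_
  rw [← prod_div_distrib, ← filter_lt_eq_Ioi, prod_filter]
  refine prod_congr rfl fun k _ => ?_
  by_cases hjk : j < k
  · simp only [hjk, true_and, if_true]
    rcases lt_or_gt_of_ne (P⁻¹.injective.ne hjk.ne) with h | h
    · simp only [hf_def, if_pos h, if_neg h.not_gt]
      exact div_self (hw j k hjk)
    · simp only [hf_def, if_pos h, if_neg h.not_gt, scatteringFactor, g]
      congr 1
      ring
  · simp only [hjk, false_and, if_false]

theorem Fin.castAdd_lt_natAdd {m n : ℕ} (i : Fin m) (j : Fin n) :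
    Fin.castAdd n i < Fin.natAdd m j := by
  simp only [Fin.lt_def, Fin.val_castAdd, Fin.val_natAdd]
  omega

theorem betheAmp_const_add {M : ℕ} (c : ℂ) (w : Fin M → ℂ) (P : Equiv.Perm (Fin M)) :
    betheAmp M (fun j => c + w j) P = betheAmp M w P := by
  simp only [betheAmp, add_sub_add_left_eq_sub]

theorem betheAmp_addCases {R K : ℕ} {P : Equiv.Perm (Fin (R + K))}
    {PR : Equiv.Perm (Fin R)} {a : Fin R → Fin (R + K)}
    {PK : Equiv.Perm (Fin K)} {b : Fin K → Fin (R + K)}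
    (ha : StrictMono a) (hPR : ∀ m, P (a m) = Fin.castAdd K (PR m))
    (hb : StrictMono b) (hPK : ∀ m, P (b m) = Fin.natAdd R (PK m))
    (u : Fin R → ℂ) (u' : Fin K → ℂ) (hw : BetheNondegenerate (Fin.addCases u u')) :
    betheAmp (R + K) (Fin.addCases u u') P = betheAmp R u PR * betheAmp K u' PK *
      ∏ j, ∏ k, if P⁻¹ (Fin.natAdd R k) < P⁻¹ (Fin.castAdd K j)
        then scatteringFactor (u j - u' k) else 1 := by
  have hPRinv (x : Fin R) : P⁻¹ (Fin.castAdd K x) = a (PR⁻¹ x) := by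
    rw [Equiv.Perm.inv_eq_iff_eq, hPR, Equiv.Perm.inv_def, Equiv.apply_symm_apply]
  have hPKinv (x : Fin K) : P⁻¹ (Fin.natAdd R x) = b (PK⁻¹ x) := by
    rw [Equiv.Perm.inv_eq_iff_eq, hPK, Equiv.Perm.inv_def, Equiv.apply_symm_apply]
  have hu : BetheNondegenerate u := fun j k hjk => by
    simpa using hw _ _ ((Fin.strictMono_castAdd K) hjk)
  have hu' : BetheNondegenerate u' := fun j k hjk => by
    simpa using hw _ _ ((Fin.strictMono_natAdd R) hjk)
  have hgt (j : Fin R) (k : Fin K) : ¬Fin.natAdd R k < Fin.castAdd K j :=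
    (Fin.castAdd_lt_natAdd j k).not_gt
  rw [betheAmp_eq_prod_scatteringFactor _ _ hw, betheAmp_eq_prod_scatteringFactor _ _ hu,
    betheAmp_eq_prod_scatteringFactor _ _ hu']
  simp only [Fin.prod_univ_add, Fin.addCases_left, Fin.addCases_right, hPRinv, hPKinv,
    Fin.castAdd_lt_natAdd, hgt, (Fin.strictMono_castAdd K).lt_iff_lt,
    (Fin.strictMono_natAdd R).lt_iff_lt, ha.lt_iff_lt, hb.lt_iff_lt, true_and, false_and,
    if_false, prod_const_one, mul_one, prod_mul_distrib]
  ring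

theorem tendsto_prod_prod_ite_scatteringFactor_sub_atTop {ι κ : Type*} [Fintype ι] [Fintype κ]
    (p : ι → κ → Prop) [∀ i k, Decidable (p i k)] (c : ι → κ → ℂ) :
    Tendsto (fun Λ : ℝ => ∏ i, ∏ k, if p i k then scatteringFactor (c i k - Λ) else 1)
      atTop (𝓝 1) := by
  have hfactor (i : ι) (k : κ) : Tendsto
      (fun Λ : ℝ => if p i k then scatteringFactor (c i k - Λ) else 1) atTop (𝓝 1) := by
    by_cases h : p i k
    · simpa only [if_pos h] using tendsto_scatteringFactor_sub_atTop (c i k)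
    · simpa only [if_neg h] using tendsto_const_nhds
  simpa only [prod_const_one] using
    tendsto_finsetProd univ fun i _ => tendsto_finsetProd univ fun k _ => hfactor i k

theorem eventually_betheNondegenerate_addCases {R K : ℕ} {v : Fin R → ℂ} {δ : Fin K → ℂ}
    (hv : BetheNondegenerate v) (hδ : BetheNondegenerate δ) :
    ∀ᶠ Λ : ℝ in atTop, BetheNondegenerate (Fin.addCases v fun k => (Λ : ℂ) + δ k) := by
  filter_upwards [eventually_all.2 fun j => eventually_all.2 fun k =>
    eventually_gt_atTop (v j - δ k + 2 * I).re] with Λ hΛ j k hjk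
  induction j using Fin.addCases with
  | left j =>
    induction k using Fin.addCases with
    | left k =>
      simpa using hv j k ((Fin.strictMono_castAdd K).lt_iff_lt.1 hjk)
    | right k =>
      simp only [Fin.addCases_left, Fin.addCases_right]
      rw [show v j - (Λ + δ k) + 2 * I = v j - δ k + 2 * I - Λ by ring, sub_ne_zero]
      exact fun h => (hΛ j k).ne (by rw [h, ofReal_re])
  | right j =>
    induction k using Fin.addCases with
    | left k => exact absurd hjk (Fin.castAdd_lt_natAdd k j).not_gt
    | right k =>
      simpa [add_sub_add_left_eq_sub] using hδ j k ((Fin.strictMono_natAdd R).lt_iff_lt.1 hjk)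

theorem betheAmp_limit_general (R K : ℕ) (P : Equiv.Perm (Fin (R + K)))
    (v : Fin R → ℂ) (δ : Fin K → ℂ)
    (hv : ∀ j k : Fin R, j < k → v j - v k + 2 * Complex.I ≠ 0)
    (hδ : ∀ j k : Fin K, j < k → δ j - δ k + 2 * Complex.I ≠ 0)
    (PR : Equiv.Perm (Fin R)) (a : Fin R → Fin (R + K))
    (ha : StrictMono a)
    (hPR : ∀ m : Fin R, P (a m) = Fin.castAdd K (PR m))
    (PK : Equiv.Perm (Fin K)) (b : Fin K → Fin (R + K))
    (hb : StrictMono b)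
    (hPK : ∀ m : Fin K, P (b m) = Fin.natAdd R (PK m)) :
    Filter.Tendsto
      (fun Λ : ℝ => betheAmp (R + K)
        (Fin.addCases (motive := fun _ => ℂ) v (fun j => (Λ : ℂ) + δ j)) P)
      Filter.atTop
      (nhds (betheAmp R v PR * betheAmp K δ PK)) := by
  have hmixed := (tendsto_prod_prod_ite_scatteringFactor_sub_atTop
    (fun j k => P⁻¹ (Fin.natAdd R k) < P⁻¹ (Fin.castAdd K j))
    (fun j k => v j - δ k)).const_mul (betheAmp R v PR * betheAmp K δ PK)
  rw [mul_one] at hmixed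
  refine hmixed.congr' ?_
  filter_upwards [eventually_betheNondegenerate_addCases hv hδ] with Λ hΛ
  rw [betheAmp_addCases ha hPR hb hPK _ _ hΛ, betheAmp_const_add]
  simp only [sub_add_eq_sub_sub_swap]

/-- As `Λ → +∞` along the reals, the Bethe amplitude of the tuple
`(v₁,…,v_R, Λ+δ₁,…,Λ+δ_K)` for a permutation `P` of `{1,…,R+K}` converges to
`A_R(P_R)[v₁,…,v_R] · A_K(P_K)[δ₁,…,δ_K]`, where `P_R` and `P_K` are the induced
permutations of `{1,…,R}` and `{1,…,K}` (via the increasing enumerations `a`, `b` of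
`P⁻¹({1,…,R})` and `P⁻¹({R+1,…,R+K})`). -/
theorem betheAmp_limit (R K : ℕ) (P : Equiv.Perm (Fin (R + K)))
    (v : Fin R → ℂ) (δ : Fin K → ℂ)
    (hv : ∀ j k : Fin R, j < k → v j - v k + 2 * Complex.I ≠ 0)
    (hδ : ∀ j k : Fin K, j < k → δ j - δ k + 2 * Complex.I ≠ 0)
    (PR : Equiv.Perm (Fin R)) (a : Fin R → Fin (R + K))
    (ha : StrictMono a)
    (haRange : ∀ x : Fin (R + K), ((P x : Fin (R + K)) : ℕ) < R ↔ ∃ m : Fin R, a m = x)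
    (hPR : ∀ m : Fin R, P (a m) = Fin.castAdd K (PR m))
    (PK : Equiv.Perm (Fin K)) (b : Fin K → Fin (R + K))
    (hb : StrictMono b)
    (hbRange : ∀ x : Fin (R + K), R ≤ ((P x : Fin (R + K)) : ℕ) ↔ ∃ m : Fin K, b m = x)
    (hPK : ∀ m : Fin K, P (b m) = Fin.natAdd R (PK m)) :
    Filter.Tendsto
      (fun Λ : ℝ => betheAmp (R + K)
        (Fin.addCases (motive := fun _ => ℂ) v (fun j => (Λ : ℂ) + δ j)) P)
      Filter.atTop
      (nhds (betheAmp R v PR * betheAmp K δ PK)) :=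
  betheAmp_limit_general R K P v δ hv hδ PR a ha hPR PK b hb hPK
end

section
/- Let M ∈ ℕ, let v₁,…,v_M ∈ ℂ satisfy v_j − v_k + 2i ≠ 0 for all 1 ≤ j < k ≤ M, and suppose there are indices a ≠ b with v_a = v_b. Then for every permutation P of {1,…,M}, A_M(P)[v₁,…,v_M] + A_M((a b)∘P)[v₁,…,v_M] = 0, where (a b) denotes the transposition of a and b and (a b)∘P is the composite permutation applying P first (the key cancellation in the proof of the "Pauli principle", Appendix D). -/
open Finset

/- Each factor of the product involves `σ * P` only through `v ∘ (σ * P) = v ∘ P`, so only the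
  sign changes. -/
theorem betheAmp_mul_of_apply_eq {M : ℕ} {v : Fin M → ℂ} {σ : Equiv.Perm (Fin M)}
    (hσ : ∀ x, v (σ x) = v x) (P : Equiv.Perm (Fin M)) :
    betheAmp M v (σ * P) = Equiv.Perm.sign σ * betheAmp M v P := by
  simp only [betheAmp, Equiv.Perm.sign_mul, Equiv.Perm.mul_apply, hσ]
  push_cast
  ring

theorem betheAmp_swap_mul {M : ℕ} {v : Fin M → ℂ} {a b : Fin M} (hab : a ≠ b)
    (hvab : v a = v b) (P : Equiv.Perm (Fin M)) :
    betheAmp M v (Equiv.swap a b * P) = -betheAmp M v P := by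
  rw [betheAmp_mul_of_apply_eq (Equiv.apply_swap_eq_self hvab), Equiv.Perm.sign_swap hab]
  simp

theorem pauli_cancellation_general (M : ℕ) (v : Fin M → ℂ)
    (a b : Fin M) (hab : a ≠ b) (hvab : v a = v b)
    (P : Equiv.Perm (Fin M)) :
    betheAmp M v P + betheAmp M v (Equiv.swap a b * P) = 0 := by
  rw [betheAmp_swap_mul hab hvab, add_neg_cancel]

/-- The key cancellation in the proof of the "Pauli principle" (Appendix D): if two
rapidities coincide, `v_a = v_b` with `a ≠ b`, then for every permutation `P`,
`A_M(P) + A_M((a b)∘P) = 0`, where `(a b)∘P` applies `P` first. -/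
theorem pauli_cancellation (M : ℕ) (v : Fin M → ℂ)
    (hv : ∀ j k : Fin M, j < k → v j - v k + 2 * Complex.I ≠ 0)
    (a b : Fin M) (hab : a ≠ b) (hvab : v a = v b)
    (P : Equiv.Perm (Fin M)) :
    betheAmp M v P + betheAmp M v (Equiv.swap a b * P) = 0 :=
  pauli_cancellation_general M v a b hab hvab P
end

section
/- ("Pauli principle" of the Bethe ansatz.) Let M ∈ ℕ, let v₁,…,v_M ∈ ℂ satisfy v_j ≠ i for all j and v_j − v_k + 2i ≠ 0 for all 1 ≤ j < k ≤ M, and suppose there are indices a ≠ b with v_a = v_b. Then the Bethe ansatz wavefunction vanishes identically: f_M(x₁,…,x_M; v₁,…,v_M) = 0 for all integer coordinates x₁,…,x_M (Appendix D). -/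
/-!
If `v a = v b` with `a ≠ b`, then `v ∘ swap a b = v`, so replacing `P` by `swap a b * P` leaves
every factor of the Bethe amplitude and every plane wave unchanged while flipping the sign `ε(P)`.
The terms of the wavefunction therefore cancel in pairs: `f = -f`, hence `f = 0`.
-/

open Finset

/-- The Bethe ansatz wavefunction
`f_M(x₁,…,x_M; v₁,…,v_M) = Σ_{P ∈ S_M} A_M(P)[v] · ∏_j ((v_{Pj}+i)/(v_{Pj}−i))^{x_j}`
at integer coordinates. -/
noncomputable def betheWF (M : ℕ) (v : Fin M → ℂ) (x : Fin M → ℤ) : ℂ :=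
  ∑ P : Equiv.Perm (Fin M), betheAmp M v P *
    ∏ j : Fin M, ((v (P j) + Complex.I) / (v (P j) - Complex.I)) ^ (x j)

theorem Fintype.sum_eq_zero_of_apply_mul_left_eq_neg {G R : Type*} [Group G] [Fintype G]
    [NonAssocRing R] [NoZeroDivisors R] [CharZero R] {F : G → R} (σ : G)
    (hF : ∀ g, F (σ * g) = -F g) : ∑ g, F g = 0 := by
  rw [← CharZero.eq_neg_self_iff, ← Finset.sum_neg_distrib]
  exact (Fintype.sum_equiv (Equiv.mulLeft σ) _ _ fun g => (hF g).symm).symm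

theorem pauli_principle_general (M : ℕ) (v : Fin M → ℂ)
    (a b : Fin M) (hab : a ≠ b) (hvab : v a = v b)
    (x : Fin M → ℤ) :
    betheWF M v x = 0 := by
  refine Fintype.sum_eq_zero_of_apply_mul_left_eq_neg (Equiv.swap a b) fun P => ?_
  simp only [betheAmp_swap_mul hab hvab, Equiv.Perm.mul_apply, Equiv.apply_swap_eq_self hvab,
    neg_mul]

/-- "Pauli principle" of the Bethe ansatz (Appendix D): if two rapidities coincide,
`v_a = v_b` with `a ≠ b`, then the Bethe ansatz wavefunction vanishes identically. -/
theorem pauli_principle (M : ℕ) (v : Fin M → ℂ)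
    (hvI : ∀ j, v j ≠ Complex.I)
    (hv : ∀ j k : Fin M, j < k → v j - v k + 2 * Complex.I ≠ 0)
    (a b : Fin M) (hab : a ≠ b) (hvab : v a = v b)
    (x : Fin M → ℤ) :
    betheWF M v x = 0 :=
  pauli_principle_general M v a b hab hvab x
end

section
/- Let M ∈ ℕ, Δ ∈ ℂ, k₁,…,k_M ∈ ℂ, and let B be a complex-valued function on the symmetric group S_M satisfying the vanishing conditions: for every Q ∈ S_M and every j ∈ {1,…,M−1}, B(Q)·(1 + exp(i(k_{Qj} + k_{Q(j+1)})) − 2Δ·exp(i k_{Q(j+1)})) + B(Q∘π_j)·(1 + exp(i(k_{Qj} + k_{Q(j+1)})) − 2Δ·exp(i k_{Qj})) = 0, where π_j is the transposition of j and j+1 and Q∘π_j applies π_j first. Define f(x₁,…,x_M) = Σ_{P ∈ S_M} B(P) · exp(i Σ_{ℓ=1}^M k_{Pℓ} x_ℓ) for integer coordinates. Then for every j ∈ {1,…,M−1}, every integer t, and all integers x₁,…,x_{j−1}, x_{j+2},…,x_M: f(x₁,…,x_{j−1}, t, t, x_{j+2},…,x_M) + f(x₁,…,x_{j−1}, t+1,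 t+1, x_{j+2},…,x_M) − 2Δ · f(x₁,…,x_{j−1}, t, t+1, x_{j+2},…,x_M) = 0 (the collision conditions (E.5) follow from the vanishing conditions (E.14), Appendix E.A). -/
open Finset

/-- A general linear combination of plane waves:
`f(x₁,…,x_M) = Σ_{P ∈ S_M} B(P) · exp(i Σ_ℓ k_{Pℓ} x_ℓ)` at integer coordinates. -/
noncomputable def planeWave (M : ℕ) (k : Fin M → ℂ) (B : Equiv.Perm (Fin M) → ℂ)
    (x : Fin M → ℤ) : ℂ :=
  ∑ P : Equiv.Perm (Fin M), B P * Complex.exp (Complex.I * ∑ j : Fin M, k (P j) * (x j : ℂ))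

/-!
Freeze every coordinate except the adjacent pair `j, j+1`. For a single plane wave the
combination `f(t,t) + f(t+1,t+1) - 2Δ f(t,t+1)` is its value at `(t,t)` times
`1 + exp(i(k_{Pj} + k_{P(j+1)})) - 2Δ exp(i k_{P(j+1)})`, and the value at `(t,t)` does not change
under `P ↦ P ∘ π_j`. So the vanishing condition at `P` says that the summands of `P` and `P ∘ π_j`
cancel; since `P ↦ P ∘ π_j` is a bijection, the sum equals its own negative, hence is zero.
-/

open Function Complex

section Pairing

variable {G R : Type*} [Group G] [Fintype G] [NonAssocRing R] [NoZeroDivisors R] [CharZero R]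

theorem Fintype.sum_eq_zero_of_mul_right_eq_neg (g : G → R) (s : G)
    (h : ∀ P, g (P * s) = -g P) : ∑ P, g P = 0 := by
  have hsum : ∑ P, g P = -∑ P, g P := by
    conv_lhs => rw [← Equiv.sum_comp (Equiv.mulRight s) g]
    rw [← sum_neg_distrib]
    exact Finset.sum_congr rfl fun P _ => h P
  exact CharZero.eq_neg_self_iff.1 hsum

end Pairing

section LinearForm

variable {ι : Type*} [Fintype ι] [DecidableEq ι]

theorem sum_mul_update (c : ι → ℂ) (x : ι → ℤ) (i : ι) (a : ℤ) :
    ∑ ℓ, c ℓ * (update x i a ℓ : ℂ) = ∑ ℓ, c ℓ * (x ℓ : ℂ) + c i * (a - x i) := by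
  rw [← add_sum_erase _ _ (mem_univ i), ← add_sum_erase _ _ (mem_univ i),
    sum_congr rfl fun ℓ hℓ => by rw [update_of_ne (ne_of_mem_erase hℓ)]]
  simp only [update_self]
  ring

theorem sum_mul_update_update (c : ι → ℂ) (x : ι → ℤ) {i i' : ι} (hne : i ≠ i') (a b : ℤ) :
    ∑ ℓ, c ℓ * (update (update x i a) i' b ℓ : ℂ)
      = ∑ ℓ, c ℓ * (update (update x i 0) i' 0 ℓ : ℂ) + c i * a + c i' * b := by
  simp only [sum_mul_update, update_of_ne hne.symm]
  push_cast
  ring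

theorem sum_perm_mul_swap_mul_of_eq (k : ι → ℂ) (P : Equiv.Perm ι) {x : ι → ℤ} {i i' : ι}
    (hx : x i = x i') :
    ∑ ℓ, k ((P * Equiv.swap i i') ℓ) * (x ℓ : ℂ) = ∑ ℓ, k (P ℓ) * (x ℓ : ℂ) := by
  simp only [Equiv.Perm.mul_apply]
  rw [← Equiv.sum_comp (Equiv.swap i i')]
  refine sum_congr rfl fun ℓ _ => ?_
  rw [Equiv.swap_apply_self]
  congr 2
  rcases eq_or_ne ℓ i with rfl | hi
  · simp [hx]
  rcases eq_or_ne ℓ i' with rfl | hi'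
  · simp [hx]
  rw [Equiv.swap_apply_of_ne_of_ne hi hi']

end LinearForm

theorem collision_combination_exp (β ρ κ κ' Δ : ℂ) (t : ℤ) :
    β * exp (I * (ρ + κ * t + κ' * t)) + β * exp (I * (ρ + κ * (t + 1) + κ' * (t + 1)))
        - 2 * Δ * (β * exp (I * (ρ + κ * t + κ' * (t + 1))))
      = β * exp (I * (ρ + (κ + κ') * t)) * (1 + exp (I * (κ + κ')) - 2 * Δ * exp (I * κ')) := by
  have h₁ : I * (ρ + κ * (t + 1) + κ' * (t + 1)) = I * (ρ + (κ + κ') * t) + I * (κ + κ') := by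
    ring
  have h₂ : I * (ρ + κ * t + κ' * (t + 1)) = I * (ρ + (κ + κ') * t) + I * κ' := by ring
  rw [h₁, h₂, exp_add, exp_add, show ρ + κ * t + κ' * t = ρ + (κ + κ') * t by ring]
  ring

theorem planeWave_collision_eq_sum {M : ℕ} (Δ : ℂ) (k : Fin M → ℂ) (B : Equiv.Perm (Fin M) → ℂ)
    {i i' : Fin M} (hne : i ≠ i') (t : ℤ) (x : Fin M → ℤ) :
    planeWave M k B (update (update x i t) i' t)
        + planeWave M k B (update (update x i (t + 1)) i' (t + 1))
        - 2 * Δ * planeWave M k B (update (update x i t) i' (t + 1))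
      = ∑ P, B P * exp (I * (∑ ℓ, k (P ℓ) * (update (update x i 0) i' 0 ℓ : ℂ)
            + (k (P i) + k (P i')) * t))
          * (1 + exp (I * (k (P i) + k (P i'))) - 2 * Δ * exp (I * k (P i'))) := by
  simp only [planeWave, sum_mul_update_update _ x hne t, sum_mul_update_update _ x hne (t + 1),
    mul_sum, ← sum_add_distrib, ← sum_sub_distrib]
  push_cast
  exact Finset.sum_congr rfl fun P _ => collision_combination_exp _ _ _ _ _ t

/-- Appendix E.A: the vanishing conditions (E.14) on the amplitudes `B(P)` imply the
collision conditions (E.5): `f(…, t, t, …) + f(…, t+1, t+1, …) − 2Δ f(…, t, t+1, …) = 0`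
at adjacent positions `j, j+1`, for all values of the remaining coordinates. -/
theorem collision_from_vanishing (M : ℕ) (Δ : ℂ) (k : Fin M → ℂ)
    (B : Equiv.Perm (Fin M) → ℂ)
    (hvan : ∀ (Q : Equiv.Perm (Fin M)) (j : Fin M) (hj : (j : ℕ) + 1 < M),
      B Q * (1 + Complex.exp (Complex.I * (k (Q j) + k (Q ⟨(j : ℕ) + 1, hj⟩)))
              - 2 * Δ * Complex.exp (Complex.I * k (Q ⟨(j : ℕ) + 1, hj⟩)))
        + B (Q * Equiv.swap j ⟨(j : ℕ) + 1, hj⟩)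
            * (1 + Complex.exp (Complex.I * (k (Q j) + k (Q ⟨(j : ℕ) + 1, hj⟩)))
                - 2 * Δ * Complex.exp (Complex.I * k (Q j))) = 0) :
    ∀ (j : Fin M) (hj : (j : ℕ) + 1 < M) (t : ℤ) (x : Fin M → ℤ),
      planeWave M k B (Function.update (Function.update x j t) ⟨(j : ℕ) + 1, hj⟩ t)
        + planeWave M k B
            (Function.update (Function.update x j (t + 1)) ⟨(j : ℕ) + 1, hj⟩ (t + 1))
        - 2 * Δ * planeWave M k B
            (Function.update (Function.update x j t) ⟨(j : ℕ) + 1, hj⟩ (t + 1))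
      = 0 := by
  intro j hj t x
  set j' : Fin M := ⟨(j : ℕ) + 1, hj⟩
  have hne : j ≠ j' := by simp [j', Fin.ext_iff]
  rw [planeWave_collision_eq_sum Δ k B hne]
  refine Fintype.sum_eq_zero_of_mul_right_eq_neg _ (Equiv.swap j j') fun P => ?_
  have hy : update (update x j 0) j' 0 j = update (update x j 0) j' 0 j' := by
    simp [update_of_ne hne]
  rw [sum_perm_mul_swap_mul_of_eq k P hy]
  simp only [Equiv.Perm.mul_apply, Equiv.swap_apply_left, Equiv.swap_apply_right]
  rw [add_comm (k (P j'))]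
  linear_combination exp (I * (∑ ℓ, k (P ℓ) * (update (update x j 0) j' 0 ℓ : ℂ)
    + (k (P j) + k (P j')) * t)) * hvan P j hj
end
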